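/- Let x ∈ C and v ∈ R^N be such that R(x) ≤ min{R(-v), R(v)} and Λ(x; v) ≠ 0, where Λ(x;v) = 2 s_x v^T(s_x Q x - c). Then Υ(v;x) = (c^T x)(v^T Q v) - (c^T v)(x^T Q v) > 0. -/

import Mathlib

open Matrix

noncomputable def Rmap {N : ℕ} (Q : Matrix (Fin N) (Fin N) ℝ) (c α : Fin N → ℝ)
    (x : Fin N → ℝ) : ℝ :=
  if 0 < c ⬝ᵥ x then c ⬝ᵥ α - (c ⬝ᵥ x) ^ 2 / (x ⬝ᵥ Q.mulVec x) else c ⬝ᵥ α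

/-!
Write `a = cᵀx > 0`, `b = cᵀv`, `p = xᵀQv` and let `q = xᵀQx`, `r = vᵀQv` be the two quadratic
values. The hypothesis on `R`, applied to `v` or `-v` according to the sign of `b`, gives
`b² q ≤ a² r`; Cauchy–Schwarz for the form `Q` gives `p² ≤ q r`; and `Λ(x; v) ≠ 0` says
exactly `a p ≠ b q`. Expanding the positive square `(a p - b q)²` with the first two bounds yields
`0 < (a p - b q)² ≤ 2 a q (a r - b p)`, and `a r - b p` is `Υ(v; x)`.
-/

namespace Matrix.PosSemidef

variable {n : Type*} [Fintype n] {Q : Matrix n n ℝ}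

lemma dotProduct_mulVec_comm (hQ : Q.PosSemidef) (u w : n → ℝ) :
    u ⬝ᵥ Q *ᵥ w = w ⬝ᵥ Q *ᵥ u := by
  have hT : Qᵀ = Q := (conjTranspose_eq_transpose_of_trivial Q).symm.trans hQ.isHermitian
  rw [← dotProduct_transpose_mulVec, hT]

lemma dotProduct_mulVec_self_nonneg (hQ : Q.PosSemidef) (u : n → ℝ) : 0 ≤ u ⬝ᵥ Q *ᵥ u := by
  simpa using hQ.dotProduct_mulVec_nonneg u

lemma sq_dotProduct_mulVec_le (hQ : Q.PosSemidef) (u w : n → ℝ) :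
    (u ⬝ᵥ Q *ᵥ w) ^ 2 ≤ (u ⬝ᵥ Q *ᵥ u) * (w ⬝ᵥ Q *ᵥ w) := by
  classical
  have h := (toBilin' Q).apply_mul_apply_le_of_forall_zero_le
    (fun u ↦ by simpa only [toBilin'_apply'] using hQ.dotProduct_mulVec_self_nonneg u) u w
  simp only [toBilin'_apply'] at h
  rwa [hQ.dotProduct_mulVec_comm w u, ← sq] at h

lemma dotProduct_mulVec_self_pos (hQ : Q.PosSemidef) {α u : n → ℝ} (hu : 0 < Q *ᵥ α ⬝ᵥ u) :
    0 < u ⬝ᵥ Q *ᵥ u := by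
  refine (hQ.dotProduct_mulVec_self_nonneg u).lt_of_ne fun h ↦ hu.ne' ?_
  have hQu : Q *ᵥ u = 0 := (hQ.dotProduct_mulVec_zero_iff u).mp (by simpa using h.symm)
  rw [dotProduct_comm, hQ.dotProduct_mulVec_comm, hQu, dotProduct_zero]

end Matrix.PosSemidef

section Rmap

variable {N : ℕ} {Q : Matrix (Fin N) (Fin N) ℝ} {c α x u v : Fin N → ℝ}

lemma Rmap_of_pos (hx : 0 < c ⬝ᵥ x) :
    Rmap Q c α x = c ⬝ᵥ α - (c ⬝ᵥ x) ^ 2 / (x ⬝ᵥ Q *ᵥ x) :=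
  if_pos hx

lemma sq_dotProduct_mul_le_of_Rmap_le (hQ : Q.PosSemidef) (hc : c = Q *ᵥ α)
    (hx : 0 < c ⬝ᵥ x) (hu : 0 < c ⬝ᵥ u) (h : Rmap Q c α x ≤ Rmap Q c α u) :
    (c ⬝ᵥ u) ^ 2 * (x ⬝ᵥ Q *ᵥ x) ≤ (c ⬝ᵥ x) ^ 2 * (u ⬝ᵥ Q *ᵥ u) := by
  subst hc
  rw [Rmap_of_pos hx, Rmap_of_pos hu, sub_le_sub_iff_left,
    div_le_div_iff₀ (hQ.dotProduct_mulVec_self_pos hu) (hQ.dotProduct_mulVec_self_pos hx)] at h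
  exact h

lemma sq_dotProduct_mul_le_of_Rmap_le_min (hQ : Q.PosSemidef) (hc : c = Q *ᵥ α)
    (hx : 0 < c ⬝ᵥ x) (h : Rmap Q c α x ≤ min (Rmap Q c α (-v)) (Rmap Q c α v)) :
    (c ⬝ᵥ v) ^ 2 * (x ⬝ᵥ Q *ᵥ x) ≤ (c ⬝ᵥ x) ^ 2 * (v ⬝ᵥ Q *ᵥ v) := by
  rcases lt_trichotomy (c ⬝ᵥ v) 0 with hneg | hzero | hpos
  · simpa [mulVec_neg] using sq_dotProduct_mul_le_of_Rmap_le hQ hc hx (u := -v)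
      (by simpa using hneg) (h.trans (min_le_left _ _))
  · rw [hzero, zero_pow two_ne_zero, zero_mul]
    exact mul_nonneg (sq_nonneg _) (hQ.dotProduct_mulVec_self_nonneg v)
  · exact sq_dotProduct_mul_le_of_Rmap_le hQ hc hx hpos (h.trans (min_le_right _ _))

end Rmap

lemma mul_sub_mul_pos_of_sq_le {a b p q r : ℝ} (ha : 0 < a) (hq : 0 < q) (hpqr : p ^ 2 ≤ q * r)
    (hbqr : b ^ 2 * q ≤ a ^ 2 * r) (hne : a * p ≠ b * q) : 0 < a * r - b * p := by
  have hsq : 0 < (a * p - b * q) ^ 2 := sq_pos_of_ne_zero (sub_ne_zero.mpr hne)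
  have hexpand : (a * p - b * q) ^ 2 ≤ 2 * a * q * (a * r - b * p) := by
    nlinarith [mul_le_mul_of_nonneg_left hpqr (sq_nonneg a), mul_le_mul_of_nonneg_left hbqr hq.le]
  exact pos_of_mul_pos_right (hsq.trans_le hexpand) (by positivity)

theorem stmt13_general {N : ℕ} (Q : Matrix (Fin N) (Fin N) ℝ) (hQ : Q.PosSemidef)
    (α : Fin N → ℝ) (c : Fin N → ℝ) (hc : c = Q.mulVec α)
    (x v : Fin N → ℝ) (hx : 0 < c ⬝ᵥ x)
    (hR : Rmap Q c α x ≤ min (Rmap Q c α (-v)) (Rmap Q c α v))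
    (hΛ : 2 * ((c ⬝ᵥ x) / (x ⬝ᵥ Q.mulVec x)) *
      (v ⬝ᵥ (((c ⬝ᵥ x) / (x ⬝ᵥ Q.mulVec x)) • Q.mulVec x - c)) ≠ 0) :
    0 < (c ⬝ᵥ x) * (v ⬝ᵥ Q.mulVec v) - (c ⬝ᵥ v) * (x ⬝ᵥ Q.mulVec v) := by
  have hqx : 0 < x ⬝ᵥ Q *ᵥ x := hQ.dotProduct_mulVec_self_pos (hc ▸ hx)
  have hne : (c ⬝ᵥ x) * (x ⬝ᵥ Q *ᵥ v) ≠ (c ⬝ᵥ v) * (x ⬝ᵥ Q *ᵥ x) := by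
    intro h
    apply hΛ
    rw [dotProduct_sub, dotProduct_smul, smul_eq_mul, hQ.dotProduct_mulVec_comm v x,
      dotProduct_comm v c, div_mul_eq_mul_div, h, mul_div_cancel_right₀ _ hqx.ne', sub_self,
      mul_zero]
  exact mul_sub_mul_pos_of_sq_le hx hqx (hQ.sq_dotProduct_mulVec_le x v)
    (sq_dotProduct_mul_le_of_Rmap_le_min hQ hc hx hR) hne

theorem stmt13 {N : ℕ} (Q : Matrix (Fin N) (Fin N) ℝ) (hQ : Q.PosSemidef)
    (α : Fin N → ℝ) (c : Fin N → ℝ) (hc : c = Q.mulVec α) (hc0 : c ≠ 0)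
    (x v : Fin N → ℝ) (hx : 0 < c ⬝ᵥ x)
    (hR : Rmap Q c α x ≤ min (Rmap Q c α (-v)) (Rmap Q c α v))
    (hΛ : 2 * ((c ⬝ᵥ x) / (x ⬝ᵥ Q.mulVec x)) *
      (v ⬝ᵥ (((c ⬝ᵥ x) / (x ⬝ᵥ Q.mulVec x)) • Q.mulVec x - c)) ≠ 0) :
    0 < (c ⬝ᵥ x) * (v ⬝ᵥ Q.mulVec v) - (c ⬝ᵥ v) * (x ⬝ᵥ Q.mulVec v) :=
  stmt13_general Q hQ α c hc x v hx hR hΛ
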